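/- arXiv:2509.03390 — 2 statements merged into one kernel-verified Lean document; each statement's English description precedes it below -/
import Mathlib

section
/- For any partition λ = (λ₁, ..., λ_r) and any move on an odd-numbered row of λ producing λ̄, we have core(λ̄) = core(λ). -/
/-- The `j`-th part (0-indexed) of a partition given as a list, `0` beyond the end. -/
def part (l : List ℕ) (j : ℕ) : ℕ := l.getD j 0

/-- A partition: a nonincreasing list of positive integers. -/
def IsPartition (l : List ℕ) : Prop :=
  l.Chain' (· ≥ ·) ∧ ∀ x ∈ l, 0 < x

/-- RIT move: replace the part at (0-indexed) position `i` by a smaller value `v`,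
keeping the sequence nonincreasing, then drop the (trailing) zeros. -/
def RitMove (l l' : List ℕ) : Prop :=
  ∃ i v, i < l.length ∧ v < part l i ∧ (l.set i v).Chain' (· ≥ ·) ∧
    l' = (l.set i v).filter (fun x => x ≠ 0)

/-- RIT move on an odd-numbered row (1-indexed), i.e. an even 0-indexed position. -/
def RitMoveOdd (l l' : List ℕ) : Prop :=
  ∃ i v, i < l.length ∧ i % 2 = 0 ∧ v < part l i ∧ (l.set i v).Chain' (· ≥ ·) ∧
    l' = (l.set i v).filter (fun x => x ≠ 0)

/-- RIT move on an even-numbered row (1-indexed), i.e. an odd 0-indexed position. -/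
def RitMoveEven (l l' : List ℕ) : Prop :=
  ∃ i v, i < l.length ∧ i % 2 = 1 ∧ v < part l i ∧ (l.set i v).Chain' (· ≥ ·) ∧
    l' = (l.set i v).filter (fun x => x ≠ 0)

/-- `core λ = (λ₂, λ₂, λ₄, λ₄, …)` (1-indexed parts), as a `0`-padded sequence. -/
def core (l : List ℕ) : ℕ → ℕ := fun j => part l (2 * (j / 2) + 1)

/-- `rem λ = (λ₁ - λ₂, λ₃ - λ₄, …)` (1-indexed parts), as a `0`-padded sequence. -/
def rem (l : List ℕ) : ℕ → ℕ := fun i => part l (2 * i) - part l (2 * i + 1)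

/-- A Nim move strictly decreases exactly one coordinate. -/
def NimMove (p q : ℕ → ℕ) : Prop := ∃ i, q i < p i ∧ ∀ j, j ≠ i → q j = p j

/-- The nim-sum (bitwise XOR) of the remnant of `l`:
`(λ₁ - λ₂) ⊕ (λ₃ - λ₄) ⊕ ⋯ ⊕ (λ_{2⌈r/2⌉-1} - λ_{2⌈r/2⌉})`. -/
def nimSum (l : List ℕ) : ℕ :=
  (List.ofFn (fun i : Fin ((l.length + 1) / 2) => rem l i)).foldr (· ^^^ ·) 0

/-- The minimal excludant of a set of naturals. -/
noncomputable def mexOf (S : Set ℕ) : ℕ := sInf {n | n ∉ S}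

/-- `G` is the (normal play) Sprague-Grundy function of RIT. -/
def IsRitGrundy (G : List ℕ → ℕ) : Prop :=
  ∀ l, IsPartition l → G l = mexOf {n | ∃ l', RitMove l l' ∧ G l' = n}

/-- `G` is the misère Grundy function of RIT (value `1` at the terminal position). -/
def IsRitMisereGrundy (G : List ℕ → ℕ) : Prop :=
  G [] = 1 ∧ ∀ l, IsPartition l → l ≠ [] →
    G l = mexOf {n | ∃ l', RitMove l l' ∧ G l' = n}

/-- `G` is the misère Grundy function of Nim on `0`-padded sequences of heaps. -/
def IsNimMisereGrundy (G : (ℕ → ℕ) → ℕ) : Prop :=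
  (∀ p : ℕ → ℕ, (∀ i, p i = 0) → G p = 1) ∧
  (∀ p : ℕ → ℕ, (Function.support p).Finite → (∃ i, p i ≠ 0) →
    G p = mexOf {n | ∃ q, NimMove p q ∧ G q = n})

/-- `P` is the set of P-positions of RIT under normal play. -/
def IsRitP (P : List ℕ → Prop) : Prop :=
  ∀ l, IsPartition l → (P l ↔ ∀ l', RitMove l l' → ¬ P l')

/-!
A move on row `i` changes only the `i`-th part. If it empties the row, the new zero is trailing
(the sequence stays nonincreasing), so deleting it shifts no other part. Since `core` reads only
the even-numbered rows, a move on an odd-numbered row leaves it unchanged.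
-/

theorem part_eq_zero_of_forall_eq_zero {l : List ℕ} (h : ∀ x ∈ l, x = 0) (j : ℕ) :
    part l j = 0 := by
  induction l generalizing j with
  | nil => rfl
  | cons a t ih =>
    cases j with
    | zero => exact h a List.mem_cons_self
    | succ j => exact ih (fun x hx => h x (List.mem_cons_of_mem a hx)) j

theorem part_set_of_ne {l : List ℕ} {i j : ℕ} (v : ℕ) (h : j ≠ i) :
    part (l.set i v) j = part l j := by
  simp [part, List.getD_eq_getElem?_getD, List.getElem?_set_ne h.symm]

theorem part_filter_ne_zero {l : List ℕ} (hl : l.IsChain (· ≥ ·)) :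
    part (l.filter (· ≠ 0)) = part l := by
  induction l with
  | nil => rfl
  | cons a t ih =>
    funext j
    by_cases ha : a = 0
    · have ht : ∀ x ∈ t, x = 0 := fun x hx =>
        Nat.le_zero.mp (ha ▸ List.rel_of_pairwise_cons (List.isChain_iff_pairwise.mp hl) hx)
      have hfilter : (a :: t).filter (· ≠ 0) = [] := by
        simpa [List.filter_eq_nil_iff, ha] using ht
      rw [hfilter, part_eq_zero_of_forall_eq_zero (by simp) j,
        part_eq_zero_of_forall_eq_zero (List.forall_mem_cons.mpr ⟨ha, ht⟩) j]
    · rw [List.filter_cons_of_pos (by simpa using ha)]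
      cases j with
      | zero => rfl
      | succ j => exact congrFun (ih hl.tail) j

theorem core_eq_of_part_odd_eq {l l' : List ℕ}
    (h : ∀ k, part l' (2 * k + 1) = part l (2 * k + 1)) : core l' = core l :=
  funext fun j => h (j / 2)

theorem stmt_0_general (l l' : List ℕ) (h : RitMoveOdd l l') :
    core l' = core l := by
  obtain ⟨i, v, -, hi, -, hchain, rfl⟩ := h
  refine core_eq_of_part_odd_eq fun k => ?_
  rw [part_filter_ne_zero hchain, part_set_of_ne v (by omega)]

/-- a move on an odd-numbered row preserves the core. -/
theorem stmt_0 (l l' : List ℕ) (hl : IsPartition l) (h : RitMoveOdd l l') :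
    core l' = core l :=
  stmt_0_general l l' h
end

section
/- For any nonempty partition λ and any RIT-move on an odd-numbered row of λ producing λ̄, the tuple rem(λ̄) is obtained from rem(λ) by strictly decreasing exactly one coordinate; i.e., rem(λ) → rem(λ̄) is a valid Nim move. -/
lemma part_anti {l : List ℕ} (h : l.Chain' (· ≥ ·)) {a b : ℕ} (hab : a ≤ b) :
    part l b ≤ part l a := by
  unfold part
  rcases lt_or_ge b l.length with hb | hb
  · have ha : a < l.length := lt_of_le_of_lt hab hb
    rw [List.getD_eq_getElem _ _ hb, List.getD_eq_getElem _ _ ha]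
    rcases eq_or_lt_of_le hab with rfl | hlt
    · exact le_refl _
    · exact List.pairwise_iff_getElem.mp (List.isChain_iff_pairwise.mp h) a b ha hb hlt
  · rw [List.getD_eq_default _ _ hb]; exact Nat.zero_le _

lemma part_set_self {l : List ℕ} {i v : ℕ} (hi : i < l.length) :
    part (l.set i v) i = v := by
  unfold part
  rw [List.getD_eq_getElem _ _ (by simpa using hi)]
  simp

lemma part_set_ne {l : List ℕ} {i v j : ℕ} (hij : j ≠ i) :
    part (l.set i v) j = part l j := by
  unfold part
  rcases lt_or_ge j l.length with hj | hj
  · rw [List.getD_eq_getElem _ _ (by simpa using hj), List.getD_eq_getElem _ _ hj]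
    rw [List.getElem_set_ne (by omega)]
  · rw [List.getD_eq_default _ _ (by simpa using hj), List.getD_eq_default _ _ hj]

lemma part_take_lt {l : List ℕ} {i j : ℕ} (h : j < i) : part (l.take i) j = part l j := by
  unfold part
  rcases lt_or_ge j l.length with hj | hj
  · have hj' : j < (l.take i).length := by simp; omega
    rw [List.getD_eq_getElem _ _ hj', List.getD_eq_getElem _ _ hj]
    simp [List.getElem_take]
  · rw [List.getD_eq_default _ _ (by simp; omega), List.getD_eq_default _ _ hj]

lemma part_oob {l : List ℕ} {j : ℕ} (h : l.length ≤ j) : part l j = 0 :=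
  List.getD_eq_default _ _ h

/-- a move on an odd-numbered row induces a Nim move on the remnant. -/
theorem stmt_1 (l l' : List ℕ) (hl : IsPartition l) (hne : l ≠ [])
    (h : RitMoveOdd l l') : NimMove (rem l) (rem l') := by
  obtain ⟨i, v, hi, hieven, hv, hchain, hl'⟩ := h
  obtain ⟨hlchain, hlpos⟩ := hl
  have h2i : 2 * (i / 2) = i := by omega
  rcases Nat.eq_zero_or_pos v with rfl | hvpos
  · -- v = 0 : i must be the last index
    have hlen : l.length = i + 1 := by
      by_contra hcon
      have hi1 : i + 1 < l.length := by omega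
      have h1 : part (l.set i 0) (i+1) ≤ part (l.set i 0) i := part_anti hchain (by omega)
      rw [part_set_self hi, part_set_ne (by omega)] at h1
      have : 0 < part l (i+1) := by
        unfold part; rw [List.getD_eq_getElem _ _ hi1]
        exact hlpos _ (List.getElem_mem _)
      omega
    have hset : l.set i 0 = l.take i ++ [0] := by
      rw [List.set_eq_take_append_cons_drop, if_pos hi]
      have : l.drop (i+1) = [] := by
        apply List.drop_eq_nil_of_le; omega
      simp [this]
    have hfil : (l.take i).filter (fun x => x ≠ 0) = l.take i := by
      apply List.filter_eq_self.mpr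
      intro a ha
      have : 0 < a := hlpos a (List.take_subset _ _ ha)
      simp; omega
    have hl'' : l' = l.take i := by
      rw [hl', hset, List.filter_append, hfil]; simp
    refine ⟨i / 2, ?_, ?_⟩
    · show rem l' (i/2) < rem l (i/2)
      unfold rem
      rw [h2i, hl'']
      have t1 : part (l.take i) i = 0 := part_oob (by simp)
      have t2 : part (l.take i) (i+1) = 0 := part_oob (by rw [List.length_take]; omega)
      have t3 : part l (i+1) = 0 := part_oob (by omega)
      rw [t1, t2, t3]
      simpa using hv
    · intro j hj
      unfold rem
      rw [hl'']
      rcases lt_or_gt_of_ne hj with hlt | hgt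
      · have h1 : 2*j < i := by omega
        rw [part_take_lt h1, part_take_lt (by omega)]
      · have h1 : l.length ≤ 2*j := by omega
        rw [part_oob (by simp; omega), part_oob (by simp; omega),
            part_oob h1, part_oob (by omega)]
  · -- v > 0 : nothing is filtered
    have hl'' : l' = l.set i v := by
      rw [hl']
      apply List.filter_eq_self.mpr
      intro a ha
      rcases List.mem_or_eq_of_mem_set ha with h1 | rfl
      · have : 0 < a := hlpos a h1
        simp; omega
      · simp; omega
    refine ⟨i / 2, ?_, ?_⟩
    · show rem l' (i/2) < rem l (i/2)
      unfold rem
      rw [h2i, hl'', part_set_self hi, part_set_ne (by omega)]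
      have hle : part l (i+1) ≤ v := by
        have h1 : part (l.set i v) (i+1) ≤ part (l.set i v) i := part_anti hchain (by omega)
        rwa [part_set_self hi, part_set_ne (by omega)] at h1
      omega
    · intro j hj
      unfold rem
      rw [hl'', part_set_ne (by omega), part_set_ne (by omega)]
end
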